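/- Let s > 1 and let X be a random variable with the Zeta law of parameter s. For a prime p, let ν_p(X) denote the p-adic valuation of X. Then the random variables (ν_p(X))_p, indexed by the primes, are mutually independent, and for each prime p the variable 1 + ν_p(X) follows the geometric law of parameter 1 − p^{-s}; that is, for all distinct primes p₁, …, p_r and all nonnegative integers a₁, …, a_r, P(ν_{p₁}(X) = a₁, …, ν_{p_r}(X) = a_r) = ∏_{i=1}^r (1 − p_i^{-s}) p_i^{-s a_i}. -/

import Mathlib

open MeasureTheory

/-!
Multiplication by `k ≠ 0` maps a set `E` bijectively onto `k * E` and scales each weight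
`n ^ (-s)` by `k ^ (-s)`, so when `E` is stable under `n ↦ k * n` the mass of `{k ∣ n} ∩ E` is
`k ^ (-s)` times that of `E`. A set `E` described by valuations at primes other than `q` is
stable under multiplication by powers of `q`, and up to the null point `0` the event
`{ν_q = b} ∩ E` is `({q ^ b ∣ n} ∩ E) \ ({q ^ (b + 1) ∣ n} ∩ E)`, of mass
`(1 - q ^ (-s)) * q ^ (-s b)` times that of `E`. Induction on the set of primes gives the product.
-/

/-- The sum `ζ(s) = ∑_{n ≥ 1} n ^ (-s)` (the `n = 0` term vanishes since `0 ^ (-s) = 0`). -/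
noncomputable def zetaSum (s : ℝ) : ℝ := ∑' n : ℕ, (n : ℝ) ^ (-s)

/-- The Zeta law of parameter `s`: the probability measure on the positive integers
assigning mass `n ^ (-s) / ζ(s)` to each `n ≥ 1`. -/
noncomputable def zetaMeasure (s : ℝ) : Measure ℕ :=
  Measure.count.withDensity fun n => ENNReal.ofReal ((n : ℝ) ^ (-s) / zetaSum s)

theorem Nat.factorization_mul_apply_of_not_dvd {p k : ℕ} (hpk : ¬p ∣ k) (m : ℕ) :
    (k * m).factorization p = m.factorization p := by
  have hk : k ≠ 0 := by rintro rfl; exact hpk (dvd_zero p)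
  rcases eq_or_ne m 0 with rfl | hm
  · simp
  · rw [Nat.factorization_mul hk hm, Finsupp.add_apply,
      Nat.factorization_eq_zero_of_not_dvd hpk, zero_add]

noncomputable def zetaDensity (s : ℝ) (n : ℕ) : ENNReal :=
  ENNReal.ofReal ((n : ℝ) ^ (-s) / zetaSum s)

section

variable {s : ℝ}

theorem zetaSum_pos (hs : 1 < s) : 0 < zetaSum s := by
  have h := (Real.summable_nat_rpow.mpr (by linarith : -s < -1)).le_tsum 1
    (fun n _ => Real.rpow_nonneg n.cast_nonneg _)
  rw [Nat.cast_one, Real.one_rpow] at h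
  exact one_pos.trans_le h

theorem zetaMeasure_apply (E : Set ℕ) : zetaMeasure s E = ∑' n : E, zetaDensity s n := by
  rw [tsum_subtype, ← lintegral_count, lintegral_indicator MeasurableSet.of_discrete,
    ← withDensity_apply _ MeasurableSet.of_discrete]
  rfl

theorem isProbabilityMeasure_zetaMeasure (hs : 1 < s) : IsProbabilityMeasure (zetaMeasure s) := by
  constructor
  rw [zetaMeasure_apply, tsum_univ]
  simp only [zetaDensity]
  rw [← ENNReal.ofReal_tsum_of_nonneg
    (fun n => div_nonneg (Real.rpow_nonneg n.cast_nonneg _) (zetaSum_pos hs).le)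
    ((Real.summable_nat_rpow.mpr (by linarith)).div_const _), tsum_div_const,
    ← zetaSum, div_self (zetaSum_pos hs).ne', ENNReal.ofReal_one]

theorem ae_ne_zero_zetaMeasure (hs : s ≠ 0) : ∀ᵐ n ∂zetaMeasure s, n ≠ 0 := by
  simp [ae_iff, zetaMeasure_apply, zetaDensity, Real.zero_rpow (neg_ne_zero.mpr hs)]

theorem zetaMeasure_image_mul_left {k : ℕ} (hk : k ≠ 0) (E : Set ℕ) :
    zetaMeasure s ((k * ·) '' E) = ENNReal.ofReal ((k : ℝ) ^ (-s)) * zetaMeasure s E := by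
  rw [zetaMeasure_apply, zetaMeasure_apply,
    tsum_image (zetaDensity s) (mul_right_injective₀ hk).injOn, ← ENNReal.tsum_mul_left]
  refine tsum_congr fun n => ?_
  rw [zetaDensity, zetaDensity, Nat.cast_mul, Real.mul_rpow (by positivity) (by positivity),
    mul_div_assoc, ENNReal.ofReal_mul (by positivity)]

theorem zetaMeasure_real_dvd_inter {k : ℕ} (hk : k ≠ 0) {E : Set ℕ}
    (hE : (k * ·) ⁻¹' E = E) :
    (zetaMeasure s).real ({n | k ∣ n} ∩ E) = (k : ℝ) ^ (-s) * (zetaMeasure s).real E := by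
  have himage : {n | k ∣ n} ∩ E = (k * ·) '' ((k * ·) ⁻¹' E) := by
    rw [Set.image_preimage_eq_inter_range, Set.inter_comm]
    ext n
    exact and_congr_right fun _ => exists_congr fun _ => eq_comm
  rw [himage, measureReal_def, zetaMeasure_image_mul_left hk, hE, ENNReal.toReal_mul,
    ENNReal.toReal_ofReal (by positivity), measureReal_def]

theorem zetaMeasure_real_factorization_eq_inter (hs : 1 < s) {q : ℕ} (hq : q.Prime) (b : ℕ)
    {E : Set ℕ} (hE : ∀ n, (q ^ n * ·) ⁻¹' E = E) :
    (zetaMeasure s).real ({n | n.factorization q = b} ∩ E)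
      = (1 - (q : ℝ) ^ (-s)) * ((q : ℝ) ^ (-s)) ^ b * (zetaMeasure s).real E := by
  have := isProbabilityMeasure_zetaMeasure hs
  have hsplit : ({n | n.factorization q = b} ∩ E : Set ℕ) =ᵐ[zetaMeasure s]
      (({n | q ^ b ∣ n} ∩ E) \ ({n | q ^ (b + 1) ∣ n} ∩ E) : Set ℕ) := by
    filter_upwards [ae_ne_zero_zetaMeasure (by linarith)] with n hn
    change (n ∈ (_ : Set ℕ)) = (n ∈ (_ : Set ℕ))
    simp only [Set.mem_inter_iff, Set.mem_ofPred_eq, hq.pow_dvd_iff_le_factorization hn,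
      eq_iff_iff]
    grind
  have hpow (k : ℕ) : (zetaMeasure s).real ({n | q ^ k ∣ n} ∩ E)
      = ((q : ℝ) ^ (-s)) ^ k * (zetaMeasure s).real E := by
    rw [zetaMeasure_real_dvd_inter (pow_ne_zero k hq.ne_zero) (hE k), Nat.cast_pow,
      ← Real.rpow_pow_comm q.cast_nonneg]
  have hsub : {n | q ^ (b + 1) ∣ n} ∩ E ⊆ {n | q ^ b ∣ n} ∩ E :=
    Set.inter_subset_inter_left E fun n => (pow_dvd_pow q b.le_succ).trans
  rw [measureReal_congr hsplit, measureReal_sdiff hsub MeasurableSet.of_discrete, hpow, hpow]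
  ring

theorem zetaMeasure_real_factorization_eq {ι : Type*} (hs : 1 < s) {p : ι → ℕ}
    (hp : ∀ i, (p i).Prime) (hinj : Function.Injective p) (a : ι → ℕ) (S : Finset ι) :
    (zetaMeasure s).real {n | ∀ i ∈ S, n.factorization (p i) = a i}
      = ∏ i ∈ S, (1 - (p i : ℝ) ^ (-s)) * ((p i : ℝ) ^ (-s)) ^ a i := by
  classical
  induction S using Finset.induction_on with
  | empty =>
    have := isProbabilityMeasure_zetaMeasure hs
    simp
  | insert j S hj ih =>
    have hinsert : {n | ∀ i ∈ insert j S, n.factorization (p i) = a i}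
        = {n : ℕ | n.factorization (p j) = a j}
          ∩ {n | ∀ i ∈ S, n.factorization (p i) = a i} := by
      ext n
      simp
    have hinv (k : ℕ) : (p j ^ k * ·) ⁻¹' {n : ℕ | ∀ i ∈ S, n.factorization (p i) = a i}
        = {n : ℕ | ∀ i ∈ S, n.factorization (p i) = a i} := by
      ext m
      refine forall₂_congr fun i hi => ?_
      have hij : ¬p i ∣ p j ^ k := fun h =>
        hj (hinj ((Nat.prime_dvd_prime_iff_eq (hp i) (hp j)).mp ((hp i).dvd_of_dvd_pow h)) ▸ hi)
      rw [Nat.factorization_mul_apply_of_not_dvd hij]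
    rw [hinsert, zetaMeasure_real_factorization_eq_inter hs (hp j) (a j) hinv, ih,
      Finset.prod_insert hj, mul_assoc]

end

/-- If `X` follows the Zeta law of parameter `s > 1`, then the `p`-adic valuations
`ν_p(X)` (for `p` prime) are mutually independent and `1 + ν_p(X)` is geometric of
parameter `1 - p ^ (-s)`: for distinct primes `p₁, …, p_r` and any `a₁, …, a_r ∈ ℕ`,
`P(ν_{p₁}(X) = a₁, …, ν_{p_r}(X) = a_r) = ∏ i, (1 - p_i ^ (-s)) * (p_i ^ (-s)) ^ (a i)`. -/
theorem zeta_valuations_independent_geometric (s : ℝ) (hs : 1 < s)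
    (r : ℕ) (p : Fin r → ℕ) (hp : ∀ i, Nat.Prime (p i)) (hinj : Function.Injective p)
    (a : Fin r → ℕ) :
    zetaMeasure s {x | ∀ i, x.factorization (p i) = a i}
      = ENNReal.ofReal (∏ i, (1 - (p i : ℝ) ^ (-s)) * ((p i : ℝ) ^ (-s)) ^ (a i)) := by
  have := isProbabilityMeasure_zetaMeasure hs
  rw [← ofReal_measureReal]
  simpa using congrArg ENNReal.ofReal (zetaMeasure_real_factorization_eq hs hp hinj a .univ)
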